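/- arXiv:0810.5099 — 2 statements merged into one kernel-verified Lean document; each statement's English description precedes it below -/
import Mathlib

section
/- Equivalence of periodicity and closedness of the orbit (equivalences (1.51) of the paper): Let ζ ⊆ ℝ^n be compact and let Ψ : ζ × ℝ → ζ be a jointly continuous flow, i.e. Ψ(x,0) = x and Ψ(Ψ(x,s),t) = Ψ(x,s+t) for all x ∈ ζ and s, t ∈ ℝ. Then for every z ∈ ζ the following are equivalent: (i) there exists T ≠ 0 with Ψ(z,T) = z; (ii) the orbit Ψ(z,ℝ) := {Ψ(z,t) : t ∈ ℝ} is a closed subset of ℝ^n. -/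
/-!
A periodic orbit is the continuous image of one period interval, hence compact. Conversely, a
compact orbit is a compact Hausdorff space on which `ℝ` acts continuously and transitively, so by
the Baire-category open mapping theorem the orbit map `t ↦ Ψ(z, t)` is open; if `z` were not
periodic this map would be injective, hence a homeomorphism from `ℝ` onto a compact space.
Inside the compact set `ζ` an orbit is compact exactly when it is closed.
-/

open Set

namespace Flow

section Group

variable {τ α : Type*} [TopologicalSpace τ] [AddGroup τ] [TopologicalSpace α] (ϕ : Flow τ α)

theorem injective_apply_of_forall_ne {x : α} (hx : ∀ t ≠ 0, ϕ t x ≠ x) :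
    Function.Injective fun t => ϕ t x := by
  intro s t hst
  by_contra hne
  refine hx (-t + s) (neg_add_eq_zero.not.mpr (Ne.symm hne)) ?_
  simp only at hst
  rw [map_add, hst, ← map_add, neg_add_cancel, map_zero_apply]

variable [IsTopologicalAddGroup τ] [SigmaCompactSpace τ] [NoncompactSpace τ] [T2Space α]

theorem exists_ne_zero_apply_eq_of_isCompact_orbit {x : α} (hx : IsCompact (ϕ.orbit x)) :
    ∃ t ≠ 0, ϕ t x = x := by
  by_contra! hper
  let _ := ϕ.toAddAction
  let O := AddAction.orbit τ x
  have : CompactSpace O := isCompact_iff_compactSpace.mp hx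
  have : ContinuousVAdd τ O := ⟨(ϕ.restrict (ϕ.isInvariant_orbit x)).cont'⟩
  let x' : O := ⟨x, AddAction.mem_orbit_self x⟩
  have hbij : Function.Bijective fun t : τ => t +ᵥ x' :=
    ⟨fun s t hst => ϕ.injective_apply_of_forall_ne hper (congrArg Subtype.val hst),
      AddAction.surjective_vadd τ x'⟩
  let e := (Equiv.ofBijective _ hbij).toHomeomorphOfContinuousOpen
    (continuous_id.vadd continuous_const) (isOpenMap_vadd_of_sigmaCompact x')
  exact not_compactSpace_iff.mpr ‹NoncompactSpace τ› e.symm.compactSpace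

end Group

section Real

variable {α : Type*} [TopologicalSpace α] (ϕ : Flow ℝ α)

theorem isCompact_orbit_of_apply_eq {x : α} {T : ℝ} (hT : T ≠ 0) (hx : ϕ T x = x) :
    IsCompact (ϕ.orbit x) :=
  Function.Periodic.compact_of_continuous (f := fun t => ϕ t x)
    (fun t => show ϕ (t + T) x = ϕ t x by rw [map_add, hx]) hT
    (ϕ.continuous continuous_id continuous_const)

theorem isCompact_orbit_iff_exists_ne_zero_apply_eq [T2Space α] (x : α) :
    IsCompact (ϕ.orbit x) ↔ ∃ T ≠ 0, ϕ T x = x :=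
  ⟨ϕ.exists_ne_zero_apply_eq_of_isCompact_orbit, fun ⟨_, hT, hx⟩ =>
    ϕ.isCompact_orbit_of_apply_eq hT hx⟩

end Real

section OfMapsTo

variable {τ X : Type*} [TopologicalSpace τ] [AddCommMonoid τ] [TopologicalSpace X] {ζ : Set X}
  {Ψ : X → τ → X}

/-- `hgroup` composes times in the opposite order to `Flow.map_add`, hence the commutativity
of `τ`. -/
def ofMapsTo (hmaps : ∀ x ∈ ζ, ∀ t, Ψ x t ∈ ζ) (hzero : ∀ x ∈ ζ, Ψ x 0 = x)
    (hgroup : ∀ x ∈ ζ, ∀ s t, Ψ (Ψ x s) t = Ψ x (s + t))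
    (hcont : ContinuousOn (fun p : X × τ => Ψ p.1 p.2) (ζ ×ˢ univ)) : Flow τ ζ where
  toFun t x := ⟨Ψ x t, hmaps x x.2 t⟩
  cont' := (hcont.comp_continuous (f := fun p : τ × ζ => ((p.2 : X), p.1)) (by fun_prop)
    fun p => ⟨p.2.2, mem_univ p.1⟩).subtype_mk _
  map_add' t₁ t₂ x := Subtype.ext <| by
    simp only [hgroup x x.2, add_comm]
  map_zero' x := Subtype.ext (hzero x x.2)

theorem image_val_orbit_ofMapsTo (hmaps : ∀ x ∈ ζ, ∀ t, Ψ x t ∈ ζ)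
    (hzero : ∀ x ∈ ζ, Ψ x 0 = x)
    (hgroup : ∀ x ∈ ζ, ∀ s t, Ψ (Ψ x s) t = Ψ x (s + t))
    (hcont : ContinuousOn (fun p : X × τ => Ψ p.1 p.2) (ζ ×ˢ univ)) (x : ζ) :
    Subtype.val '' (ofMapsTo hmaps hzero hgroup hcont).orbit x = range (Ψ x) := by
  rw [orbit_eq_range, ← range_comp]
  rfl

end OfMapsTo

end Flow

/-- **Equivalence of periodicity and closedness of the orbit (equivalences (1.51)).**
For a jointly continuous flow on a compact set ζ ⊆ ℝ^n, a state is periodic iff its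
orbit is a closed subset of ℝ^n. -/
theorem periodic_iff_orbit_closed {n : ℕ} (ζ : Set (EuclideanSpace ℝ (Fin n)))
    (hcomp : IsCompact ζ)
    (Ψ : EuclideanSpace ℝ (Fin n) → ℝ → EuclideanSpace ℝ (Fin n))
    (hmaps : ∀ x ∈ ζ, ∀ t : ℝ, Ψ x t ∈ ζ)
    (hzero : ∀ x ∈ ζ, Ψ x 0 = x)
    (hgroup : ∀ x ∈ ζ, ∀ s t : ℝ, Ψ (Ψ x s) t = Ψ x (s + t))
    (hcont : ContinuousOn (fun p : (EuclideanSpace ℝ (Fin n)) × ℝ => Ψ p.1 p.2)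
      (ζ ×ˢ (Set.univ : Set ℝ))) :
    ∀ z ∈ ζ, ((∃ T : ℝ, T ≠ 0 ∧ Ψ z T = z) ↔ IsClosed (Set.range (Ψ z))) := by
  intro z hz
  let ϕ := Flow.ofMapsTo hmaps hzero hgroup hcont
  calc (∃ T : ℝ, T ≠ 0 ∧ Ψ z T = z) ↔ ∃ T ≠ 0, ϕ T ⟨z, hz⟩ = ⟨z, hz⟩ :=
        exists_congr fun _ => and_congr_right' Subtype.mk_eq_mk.symm
    _ ↔ IsCompact (ϕ.orbit ⟨z, hz⟩) :=
        (ϕ.isCompact_orbit_iff_exists_ne_zero_apply_eq _).symm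
    _ ↔ IsCompact (range (Ψ z)) := by
        rw [Subtype.isCompact_iff, Flow.image_val_orbit_ofMapsTo]
    _ ↔ IsClosed (range (Ψ z)) :=
        ⟨IsCompact.isClosed, fun h =>
          hcomp.of_isClosed_subset h (range_subset_iff.2 (hmaps z hz))⟩
end

section
/- Zimmer are attractors (coherence property, claim (2.108)): Let Ψ be a normal, comanent and globally immanent flow function on a compact set ζ ⊆ ℝ^n, let x₀ ∈ ζ and set χ := cl(Ψ(x₀,ℝ)). Then for all nonempty sets U, V ⊆ χ that, are open in the subspace topology of χ, there exist x ∈ U and t ∈ ℝ with Ψ(x,t) ∈ V. -/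
open Filter Topology Metric Set

/-- **Zimmer are attractors (coherence property, claim (2.108)).**
For any two nonempty relatively open subsets U, V of a Zimmer χ there is a
point of U that is carried into V by the flow. -/
theorem zimmer_coherence {n : ℕ} (ζ : Set (EuclideanSpace ℝ (Fin n)))
    (hcomp : IsCompact ζ)
    (Ψ : EuclideanSpace ℝ (Fin n) → ℝ → EuclideanSpace ℝ (Fin n))
    (hmaps : ∀ x ∈ ζ, ∀ t : ℝ, Ψ x t ∈ ζ)
    (hzero : ∀ x ∈ ζ, Ψ x 0 = x)
    (hpart : ∀ x ∈ ζ, ∀ y ∈ ζ,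
      Set.range (Ψ x) = Set.range (Ψ y) ∨ Disjoint (Set.range (Ψ x)) (Set.range (Ψ y)))
    (hnormal : ∀ x ∈ ζ, Continuous (Ψ x))
    (hcoman : ∀ t : ℝ, ∀ ε > (0:ℝ), ∃ δ > (0:ℝ), ∀ x ∈ ζ, ∀ y ∈ ζ,
      ‖x - y‖ < δ → ‖Ψ x t - Ψ y t‖ < ε)
    (himm : ∀ ε > (0:ℝ), ∃ T > (0:ℝ), ∀ x ∈ ζ, ∀ s : ℝ,
      ∃ u : ℝ, |u| ≤ T ∧ ‖Ψ x s - Ψ x u‖ ≤ ε)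
    (x₀ : EuclideanSpace ℝ (Fin n)) (hx₀ : x₀ ∈ ζ) :
    ∀ U V : Set (EuclideanSpace ℝ (Fin n)), U.Nonempty → V.Nonempty →
      (∃ U₀, IsOpen U₀ ∧ U = U₀ ∩ closure (Set.range (Ψ x₀))) →
      (∃ V₀, IsOpen V₀ ∧ V = V₀ ∩ closure (Set.range (Ψ x₀))) →
      ∃ x ∈ U, ∃ t : ℝ, Ψ x t ∈ V := by
  rintro U V hUne hVne ⟨U₀, hU₀, rfl⟩ ⟨V₀, hV₀, rfl⟩
  -- The orbit of x₀ is contained in its closure χ.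
  have horb : Set.range (Ψ x₀) ⊆ closure (Set.range (Ψ x₀)) := subset_closure
  -- The orbit meets U₀.
  obtain ⟨u, huU₀, huχ⟩ := hUne
  obtain ⟨s₁, hs₁⟩ : (Set.range (Ψ x₀) ∩ U₀).Nonempty := by
    rw [Set.inter_comm]
    exact mem_closure_iff.mp huχ U₀ hU₀ huU₀
  -- The orbit meets V₀.
  obtain ⟨v, hvV₀, hvχ⟩ := hVne
  obtain ⟨s₂, hs₂⟩ : (Set.range (Ψ x₀) ∩ V₀).Nonempty := by
    rw [Set.inter_comm]
    exact mem_closure_iff.mp hvχ V₀ hV₀ hvV₀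
  obtain ⟨⟨t₁, ht₁⟩, hs₁U⟩ := hs₁
  obtain ⟨⟨t₂, ht₂⟩, hs₂V⟩ := hs₂
  -- Let x := Ψ x₀ t₁ ∈ U.
  set x := Ψ x₀ t₁ with hxdef
  have hxζ : x ∈ ζ := hmaps x₀ hx₀ t₁
  have hxU : x ∈ U₀ ∩ closure (Set.range (Ψ x₀)) := by
    constructor
    · exact ht₁ ▸ hs₁U
    · exact horb ⟨t₁, rfl⟩
  -- Orbits of x and x₀ intersect (at x), so they coincide.
  have hxx : x ∈ Set.range (Ψ x) := ⟨0, hzero x hxζ⟩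
  have hxx₀ : x ∈ Set.range (Ψ x₀) := ⟨t₁, rfl⟩
  have hranges : Set.range (Ψ x) = Set.range (Ψ x₀) := by
    rcases hpart x hxζ x₀ hx₀ with h | h
    · exact h
    · exact absurd (h.ne_of_mem hxx hxx₀) (fun hne => hne rfl)
  -- s₂ is on the orbit of x, so some Ψ x t equals s₂ ∈ V.
  have : Ψ x₀ t₂ ∈ Set.range (Ψ x) := hranges ▸ ⟨t₂, rfl⟩
  obtain ⟨t, ht⟩ := this
  refine ⟨x, hxU, t, ?_, ?_⟩
  · rw [ht, ht₂]; exact hs₂V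
  · rw [ht]; exact horb ⟨t₂, rfl⟩
end
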